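/- arXiv:2503.16210 — 2 statements merged into one kernel-verified Lean document; each statement's English description precedes it below -/
import Mathlib

section
/- Let X be a real Banach space, let A, B : X →L[ℝ] X be bounded linear operators that commute (A ∘ B = B ∘ A), let τ > 0, and let M ≥ 0 satisfy ‖exp(s·A)‖ ≤ M and ‖exp(s·B)‖ ≤ M for all s ∈ [0, τ]. Then ‖τ·φ₁(τ·(A+B)) − τ·exp((τ/2)·A) ∘ φ₁(τ·B)‖ ≤ M² · (‖B ∘ A‖ + ‖A ∘ A‖) · τ³. -/
open MeasureTheory intervalIntegral
open scoped Nat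

/-- The operator `φ_ℓ(T) = ∑_{k=0}^∞ T^k / (ℓ+k)!` (for `ℓ = 0` this is `exp T`). -/
noncomputable def phi {X : Type*} [NormedAddCommGroup X] [NormedSpace ℝ X] [CompleteSpace X]
    (ℓ : ℕ) (T : X →L[ℝ] X) : X →L[ℝ] X :=
  ∑' k : ℕ, (((ℓ + k)! : ℝ)⁻¹) • T ^ k

/-!
Both operators are integrals over `[0, τ]`: `τ φ₁(τ(A+B)) = ∫ e^{sA} e^{sB} ds` and
`τ e^{τA/2} φ₁(τB) = ∫ e^{τA/2} e^{sB} ds`. Since `τ/2` is the midpoint, the first-order term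
`(s - τ/2) A e^{τA/2} e^{τB/2}` integrates to zero and may be subtracted from the integrand; what
remains is `O((s - τ/2)²)` by the mean value inequality applied twice, using that `A` commutes
with `B` and with `e^{τA/2}`. Integrating `M²(‖BA‖ + ‖AA‖)(τ/2)²` over `[0, τ]` gives the bound.
-/

open NormedSpace (exp)
open Set

section BanachAlgebra

variable {𝔸 : Type*} [NormedRing 𝔸] [NormedAlgebra ℝ 𝔸] [CompleteSpace 𝔸]

theorem norm_mul_exp_smul_sub_le (C T : 𝔸) {a b K : ℝ}
    (hK : ∀ u ∈ uIcc a b, ‖C * (T * exp (u • T))‖ ≤ K) :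
    ‖C * (exp (b • T) - exp (a • T))‖ ≤ K * |b - a| := by
  rw [mul_sub, ← Real.norm_eq_abs]
  exact (convex_uIcc a b).norm_image_sub_le_of_norm_hasDerivWithin_le
    (f := fun u : ℝ => C * exp (u • T))
    (fun u _ => ((hasDerivAt_exp_smul_const' T u).const_mul C).hasDerivWithinAt) hK
    left_mem_uIcc right_mem_uIcc

theorem norm_exp_smul_sub_sub_le (T : 𝔸) {a b L : ℝ}
    (hL : ∀ u ∈ uIcc a b, ‖T * (T * exp (u • T))‖ ≤ L) :
    ‖exp (b • T) - exp (a • T) - (b - a) • (T * exp (a • T))‖ ≤ L * |b - a| * |b - a| := by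
  have hderiv (u : ℝ) : HasDerivAt (fun u : ℝ => exp (u • T) - (u - a) • (T * exp (a • T)))
      (T * exp (u • T) - T * exp (a • T)) u := by
    have h := (hasDerivAt_exp_smul_const' T u).sub (((hasDerivAt_id u).sub_const a).smul_const
      (T * exp (a • T)))
    rwa [one_smul] at h
  have hbound : ∀ u ∈ uIcc a b, ‖T * exp (u • T) - T * exp (a • T)‖ ≤ L * |b - a| := by
    intro u hu
    rw [← mul_sub]
    refine (norm_mul_exp_smul_sub_le T T fun v hv => hL v ?_).trans ?_
    · exact uIcc_subset_uIcc left_mem_uIcc hu hv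
    · exact mul_le_mul_of_nonneg_left (abs_sub_left_of_mem_uIcc hu)
        ((norm_nonneg _).trans (hL a left_mem_uIcc))
  rw [← Real.norm_eq_abs (b - a)]
  have h := (convex_uIcc a b).norm_image_sub_le_of_norm_hasDerivWithin_le
    (fun u _ => (hderiv u).hasDerivWithinAt) hbound left_mem_uIcc right_mem_uIcc
  rwa [sub_self, zero_smul, sub_zero, sub_right_comm] at h

theorem norm_exp_mul_exp_sub_first_order_le {A B : 𝔸} (hAB : Commute A B) {c s M : ℝ}
    (hA : ∀ u ∈ uIcc c s, ‖exp (u • A)‖ ≤ M) (hB : ∀ u ∈ uIcc c s, ‖exp (u • B)‖ ≤ M) :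
    ‖exp (s • A) * exp (s • B) - exp (c • A) * exp (s • B)
        - (s - c) • (A * exp (c • A) * exp (c • B))‖
      ≤ M ^ 2 * (‖B * A‖ + ‖A * A‖) * (s - c) ^ 2 := by
  have hM : 0 ≤ M := (norm_nonneg _).trans (hA c left_mem_uIcc)
  have hAexp : Commute A (exp (c • A)) := ((Commute.refl A).smul_right c).exp_right
  have hremainder : ‖exp (s • A) - exp (c • A) - (s - c) • (A * exp (c • A))‖
      ≤ ‖A * A‖ * M * |s - c| * |s - c| :=
    norm_exp_smul_sub_sub_le A fun u hu => by
      rw [← mul_assoc]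
      exact (norm_mul_le _ _).trans (mul_le_mul_of_nonneg_left (hA u hu) (norm_nonneg _))
  have hcross : ‖A * exp (c • A) * (exp (s • B) - exp (c • B))‖ ≤ M * ‖B * A‖ * M * |s - c| :=
    norm_mul_exp_smul_sub_le _ B fun u hu => calc
      ‖A * exp (c • A) * (B * exp (u • B))‖ = ‖exp (c • A) * (B * A) * exp (u • B)‖ := by
        rw [hAexp.eq, ← hAB.eq]; simp only [mul_assoc]
      _ ≤ ‖exp (c • A)‖ * ‖B * A‖ * ‖exp (u • B)‖ := norm_mul₃_le
      _ ≤ M * ‖B * A‖ * M := by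
        gcongr
        exacts [hA c left_mem_uIcc, hB u hu]
  have hdecomp : exp (s • A) * exp (s • B) - exp (c • A) * exp (s • B)
        - (s - c) • (A * exp (c • A) * exp (c • B))
      = (exp (s • A) - exp (c • A) - (s - c) • (A * exp (c • A))) * exp (s • B)
        + (s - c) • (A * exp (c • A) * (exp (s • B) - exp (c • B))) := by
    simp only [sub_mul, mul_sub, smul_mul_assoc, smul_sub, mul_assoc]
    abel
  rw [hdecomp, ← sq_abs (s - c)]
  calc _ ≤ ‖exp (s • A) - exp (c • A) - (s - c) • (A * exp (c • A))‖ * ‖exp (s • B)‖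
        + |s - c| * ‖A * exp (c • A) * (exp (s • B) - exp (c • B))‖ := by
        refine (norm_add_le _ _).trans (add_le_add (norm_mul_le _ _) ?_)
        rw [norm_smul, Real.norm_eq_abs]
    _ ≤ (‖A * A‖ * M * |s - c| * |s - c|) * M + |s - c| * (M * ‖B * A‖ * M * |s - c|) := by
        gcongr
        exact hB s right_mem_uIcc
    _ = M ^ 2 * (‖B * A‖ + ‖A * A‖) * |s - c| ^ 2 := by ring

theorem hasSum_integral_exp_smul (T : 𝔸) (τ : ℝ) :
    HasSum (fun k : ℕ => (τ ^ (k + 1) / (k + 1)!) • T ^ k) (∫ s in (0:ℝ)..τ, exp (s • T)) := by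
  have hterm (k : ℕ) : ∫ s in (0:ℝ)..τ, (k ! : ℝ)⁻¹ • (s • T) ^ k
      = (τ ^ (k + 1) / (k + 1)!) • T ^ k := by
    simp_rw [smul_pow, smul_smul]
    rw [intervalIntegral.integral_smul_const, intervalIntegral.integral_const_mul, integral_pow]
    congr 1
    push_cast [Nat.factorial_succ]
    field_simp
    ring
  simp_rw [← hterm]
  refine intervalIntegral.hasSum_integral_of_dominated_convergence
    (fun k _ => ‖(k ! : ℝ)⁻¹ • (τ • T) ^ k‖) (fun k => ?_) (fun k => ?_)
    (ae_of_all _ fun _ _ => NormedSpace.norm_expSeries_summable' (τ • T)) intervalIntegrable_const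
    (ae_of_all _ fun s _ => NormedSpace.exp_series_hasSum_exp' (s • T))
  · exact (by fun_prop : Continuous fun s : ℝ => (k ! : ℝ)⁻¹ • (s • T) ^ k).aestronglyMeasurable
  · refine ae_of_all _ fun s hs => ?_
    have hsτ : |s| ≤ |τ| := by simpa using abs_sub_left_of_mem_uIcc (uIoc_subset_uIcc hs)
    simp only [smul_pow, norm_smul, Real.norm_eq_abs, abs_pow]
    gcongr

end BanachAlgebra

section Phi

variable {X : Type*} [NormedAddCommGroup X] [NormedSpace ℝ X] [CompleteSpace X]

theorem hasSum_phi (ℓ : ℕ) (T : X →L[ℝ] X) :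
    HasSum (fun k : ℕ => ((ℓ + k)! : ℝ)⁻¹ • T ^ k) (phi ℓ T) := by
  refine (Summable.of_norm_bounded (NormedSpace.norm_expSeries_summable' (𝕂 := ℝ) T)
    fun k => ?_).hasSum
  rw [norm_smul, norm_smul]
  gcongr
  simp only [norm_inv, RCLike.norm_natCast]
  gcongr
  exact Nat.le_add_left k ℓ

theorem integral_exp_smul_eq_smul_phi_one (T : X →L[ℝ] X) (τ : ℝ) :
    ∫ s in (0:ℝ)..τ, exp (s • T) = τ • phi 1 (τ • T) := by
  have hterms : (fun k : ℕ => (τ ^ (k + 1) / (k + 1)!) • T ^ k)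
      = fun k : ℕ => τ • (((1 + k)! : ℝ)⁻¹ • (τ • T) ^ k) := by
    funext k
    rw [smul_pow, smul_smul, smul_smul, add_comm 1 k]
    congr 1
    ring
  refine (hasSum_integral_exp_smul T τ).unique ?_
  rw [hterms]
  exact (hasSum_phi 1 (τ • T)).const_smul τ

theorem smul_phi_one_add_sub_eq_integral {A B : X →L[ℝ] X} (hAB : Commute A B) (τ : ℝ)
    (P : X →L[ℝ] X) :
    τ • phi 1 (τ • (A + B)) - τ • (exp ((τ / 2) • A)).comp (phi 1 (τ • B)) =
      ∫ s in (0:ℝ)..τ, (exp (s • A) * exp (s • B) - exp ((τ / 2) • A) * exp (s • B)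
        - (s - τ / 2) • P) := by
  let +nondep : NormedAlgebra ℚ (X →L[ℝ] X) := .restrictScalars ℚ ℝ _
  have hcont (T : X →L[ℝ] X) : Continuous fun s : ℝ => exp (s • T) :=
    (differentiable_exp_smul_const ℝ T).continuous
  have hsplit (s : ℝ) : exp (s • (A + B)) = exp (s • A) * exp (s • B) := by
    rw [smul_add]
    exact NormedSpace.exp_add_of_commute ((hAB.smul_left s).smul_right s)
  have hleft : ∫ s in (0:ℝ)..τ, exp ((τ / 2) • A) * exp (s • B)
      = exp ((τ / 2) • A) * ∫ s in (0:ℝ)..τ, exp (s • B) :=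
    (ContinuousLinearMap.mul ℝ _ (exp ((τ / 2) • A))).intervalIntegral_comp_comm
      ((hcont B).intervalIntegrable _ _)
  have hmidpoint : ∫ s in (0:ℝ)..τ, (s - τ / 2) • P = 0 := by
    have hmean : ∫ s in (0:ℝ)..τ, (s - τ / 2) = 0 := by
      rw [intervalIntegral.integral_sub intervalIntegrable_id intervalIntegrable_const,
        integral_id, intervalIntegral.integral_const, smul_eq_mul]
      ring
    rw [intervalIntegral.integral_smul_const, hmean, zero_smul]
  rw [intervalIntegral.integral_sub, intervalIntegral.integral_sub, hmidpoint, sub_zero, hleft,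
    ← funext hsplit, integral_exp_smul_eq_smul_phi_one, integral_exp_smul_eq_smul_phi_one,
    mul_smul_comm, ContinuousLinearMap.mul_def]
  all_goals exact Continuous.intervalIntegrable (by fun_prop) _ _

end Phi

theorem stmt7_general {X : Type*} [NormedAddCommGroup X] [NormedSpace ℝ X] [CompleteSpace X]
    (A B : X →L[ℝ] X) (hcomm : A.comp B = B.comp A) (τ : ℝ) (hτ : 0 < τ) (M : ℝ)
    (hA : ∀ s ∈ Set.Icc (0:ℝ) τ, ‖NormedSpace.exp (s • A)‖ ≤ M)
    (hB : ∀ s ∈ Set.Icc (0:ℝ) τ, ‖NormedSpace.exp (s • B)‖ ≤ M) :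
    ‖τ • phi 1 (τ • (A + B)) - τ • (NormedSpace.exp ((τ/2) • A)).comp (phi 1 (τ • B))‖ ≤
      M^2 * (‖B.comp A‖ + ‖A.comp A‖) * τ^3 := by
  rw [smul_phi_one_add_sub_eq_integral hcomm τ (A * exp ((τ / 2) • A) * exp ((τ / 2) • B))]
  calc _ ≤ M ^ 2 * (‖B * A‖ + ‖A * A‖) * (τ / 2) ^ 2 * |τ - 0| := by
        refine intervalIntegral.norm_integral_le_of_norm_le_const fun s hs => ?_
        rw [uIoc_of_le hτ.le] at hs
        have hsub : uIcc (τ / 2) s ⊆ Icc 0 τ :=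
          uIcc_subset_Icc ⟨by linarith, by linarith⟩ ⟨hs.1.le, hs.2⟩
        refine (norm_exp_mul_exp_sub_first_order_le hcomm (fun u hu => hA u (hsub hu))
          (fun u hu => hB u (hsub hu))).trans (mul_le_mul_of_nonneg_left ?_ (by positivity))
        exact sq_le_sq' (by linarith [hs.1]) (by linarith [hs.2])
    _ = M ^ 2 * (‖B * A‖ + ‖A * A‖) * (τ ^ 3 / 4) := by rw [sub_zero, abs_of_pos hτ]; ring
    _ ≤ M ^ 2 * (‖B * A‖ + ‖A * A‖) * τ ^ 3 := by gcongr; linarith [pow_pos hτ 3]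

theorem stmt7 {X : Type*} [NormedAddCommGroup X] [NormedSpace ℝ X] [CompleteSpace X]
    (A B : X →L[ℝ] X) (hcomm : A.comp B = B.comp A) (τ : ℝ) (hτ : 0 < τ) (M : ℝ) (hM : 0 ≤ M)
    (hA : ∀ s ∈ Set.Icc (0:ℝ) τ, ‖NormedSpace.exp (s • A)‖ ≤ M)
    (hB : ∀ s ∈ Set.Icc (0:ℝ) τ, ‖NormedSpace.exp (s • B)‖ ≤ M) :
    ‖τ • phi 1 (τ • (A + B)) - τ • (NormedSpace.exp ((τ/2) • A)).comp (phi 1 (τ • B))‖ ≤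
      M^2 * (‖B.comp A‖ + ‖A.comp A‖) * τ^3 :=
  stmt7_general A B hcomm τ hτ M hA hB
end

section
/- Let X be a real Banach space, let A, B : X →L[ℝ] X be bounded linear operators that commute (A ∘ B = B ∘ A), let τ > 0, and let ℓ ≥ 1 be an integer. Then τ·φ_ℓ(τ·(A+B)) − ℓ!·τ·φ_ℓ(τ·A) ∘ φ_ℓ(τ·B) = (ℓ/(τ^{2ℓ−1}·(ℓ−1)!)) · ∫_{s∈[0,τ]} ∫_{σ∈[0,τ]} ∫_{ξ∈[s,σ]} (σ·s)^{ℓ−1} · (τ−s) · exp((τ−ξ)·A) ∘ φ₁((τ−s)·B) ∘ B ∘ A dξ dσ ds, where the inner integral over ξ from s to σ is an oriented (interval) integral. -/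
/-! The inner ξ-integral is elementary: `exp ((τ - ξ) • A) * A` is minus the ξ-derivative of
`exp ((τ - ξ) • A)`, and `(τ - s) • φ₁((τ - s) • B) * B = exp ((τ - s) • B) - 1`. Writing
`E_T(s) = exp ((τ - s) • T)`, what remains is
`∫∫ σ^(ℓ-1) s^(ℓ-1) (E_A(s) - E_A(σ)) (E_B(s) - 1) dσ ds`, which by linearity equals
`(τ^ℓ/ℓ) ∫ s^(ℓ-1) E_A E_B - (∫ s^(ℓ-1) E_A) (∫ s^(ℓ-1) E_B)`. As `A` and `B` commute,
`E_A E_B = E_(A+B)`, and every moment `∫₀^τ s^(ℓ-1) E_T(s) ds` equals `(ℓ-1)! τ^ℓ φ_ℓ(τ • T)`: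
integrate the exponential series term by term against the Beta integral
`∫₀^τ s^a (τ - s)^b ds = a! b! τ^(a+b+1) / (a+b+1)!`. -/

open MeasureTheory intervalIntegral
open scoped Nat

open NormedSpace Set

theorem integral_pow_mul_sub_pow_succ (a b : ℕ) (τ : ℝ) :
    ∫ s in (0:ℝ)..τ, s ^ a * (τ - s) ^ (b + 1) =
      (b + 1) / (a + 1) * ∫ s in (0:ℝ)..τ, s ^ (a + 1) * (τ - s) ^ b := by
  have hu : ∀ x ∈ uIcc 0 τ,
      HasDerivAt (fun x : ℝ => (τ - x) ^ (b + 1)) (-((b + 1) * (τ - x) ^ b)) x := fun x _ => by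
    simpa [mul_comm] using ((hasDerivAt_id x).const_sub τ).fun_pow (b + 1)
  have hv : ∀ x ∈ uIcc 0 τ,
      HasDerivAt (fun x : ℝ => x ^ (a + 1) / (a + 1)) (x ^ a) x := fun x _ =>
    ((hasDerivAt_pow (a + 1) x).div_const ((a : ℝ) + 1)).congr_deriv (by push_cast; field_simp)
  have parts := intervalIntegral.integral_mul_deriv_eq_deriv_mul hu hv
    ((by fun_prop : Continuous _).intervalIntegrable 0 τ)
    ((by fun_prop : Continuous _).intervalIntegrable 0 τ)
  simp only [sub_self, zero_pow (Nat.succ_ne_zero _), zero_div, mul_zero, zero_mul,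
    zero_sub] at parts
  simp only [mul_comm (_ ^ a), parts, ← intervalIntegral.integral_const_mul,
    ← intervalIntegral.integral_neg]
  congr 1 with x
  field_simp

theorem integral_pow_mul_sub_pow (a b : ℕ) (τ : ℝ) :
    ∫ s in (0:ℝ)..τ, s ^ a * (τ - s) ^ b = (a ! * b ! / (a + b + 1)! : ℝ) * τ ^ (a + b + 1) := by
  induction b generalizing a with
  | zero => simp [Nat.factorial_succ, field]
  | succ b ih =>
    rw [integral_pow_mul_sub_pow_succ, ih, show a + 1 + b + 1 = a + (b + 1) + 1 by omega,
      Nat.factorial_succ a, Nat.factorial_succ b]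
    push_cast
    field_simp

section BanachAlgebra

variable {𝔸 : Type*} [NormedRing 𝔸] [NormedAlgebra ℝ 𝔸] [CompleteSpace 𝔸]

theorem integral_const_mul_of_intervalIntegrable {f : ℝ → 𝔸} {a b : ℝ}
    (hf : IntervalIntegrable f volume a b) (c : 𝔸) :
    ∫ x in a..b, c * f x = c * ∫ x in a..b, f x :=
  (ContinuousLinearMap.mul ℝ 𝔸 c).intervalIntegral_comp_comm hf

theorem integral_mul_const_of_intervalIntegrable {f : ℝ → 𝔸} {a b : ℝ}
    (hf : IntervalIntegrable f volume a b) (c : 𝔸) :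
    ∫ x in a..b, f x * c = (∫ x in a..b, f x) * c :=
  ((ContinuousLinearMap.mul ℝ 𝔸).flip c).intervalIntegral_comp_comm hf

theorem hasDerivAt_exp_sub_smul (A : 𝔸) (τ ξ : ℝ) :
    HasDerivAt (fun ξ : ℝ => exp ((τ - ξ) • A)) (-(exp ((τ - ξ) • A) * A)) ξ := by
  simpa [Function.comp_def] using
    (hasDerivAt_exp_smul_const A (τ - ξ)).scomp ξ ((hasDerivAt_id ξ).const_sub τ)

theorem continuous_exp_sub_smul (A : 𝔸) (τ : ℝ) : Continuous fun s : ℝ => exp ((τ - s) • A) :=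
  continuous_iff_continuousAt.2 fun s => (hasDerivAt_exp_sub_smul A τ s).continuousAt

theorem integral_exp_sub_smul_mul_mul (A C : 𝔸) (τ s σ : ℝ) :
    ∫ ξ in s..σ, exp ((τ - ξ) • A) * (A * C) = (exp ((τ - s) • A) - exp ((τ - σ) • A)) * C := by
  have hderiv : ∀ ξ ∈ uIcc s σ, HasDerivAt (fun ξ : ℝ => -(exp ((τ - ξ) • A) * C))
      (exp ((τ - ξ) • A) * (A * C)) ξ := fun ξ _ => by
    simpa [mul_assoc] using ((hasDerivAt_exp_sub_smul A τ ξ).mul_const C).fun_neg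
  rw [integral_eq_sub_of_hasDerivAt hderiv
    (((continuous_exp_sub_smul A τ).mul continuous_const).intervalIntegrable s σ), sub_mul]
  abel

theorem exp_smul_mul_exp_smul {A B : 𝔸} (h : Commute A B) (t : ℝ) :
    exp (t • A) * exp (t • B) = exp (t • (A + B)) := by
  let : NormedAlgebra ℚ 𝔸 := .restrictScalars ℚ ℝ 𝔸
  rw [smul_add, exp_add_of_commute ((h.smul_left t).smul_right t)]

theorem integral_integral_pow_smul_sub_mul_sub_one {f g : ℝ → 𝔸} (hf : Continuous f)
    (hg : Continuous g) (n : ℕ) (τ : ℝ) :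
    ∫ s in (0:ℝ)..τ, ∫ σ in (0:ℝ)..τ, (σ ^ n * s ^ n) • ((f s - f σ) * (g s - 1)) =
      (τ ^ (n + 1) / (n + 1)) • (∫ s in (0:ℝ)..τ, s ^ n • (f s * g s)) -
        (∫ s in (0:ℝ)..τ, s ^ n • f s) * ∫ s in (0:ℝ)..τ, s ^ n • g s := by
  set c : ℝ := τ ^ (n + 1) / (n + 1)
  set F := ∫ s in (0:ℝ)..τ, s ^ n • f s
  have hc : ∫ s in (0:ℝ)..τ, s ^ n = c := by simp [c]
  have inner (s : ℝ) : ∫ σ in (0:ℝ)..τ, (σ ^ n * s ^ n) • ((f s - f σ) * (g s - 1)) =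
      s ^ n • ((c • f s - F) * (g s - 1)) := by
    calc _ = ∫ σ in (0:ℝ)..τ, σ ^ n • (s ^ n • (f s * (g s - 1))) -
          (σ ^ n • f σ) * (s ^ n • (g s - 1)) := by
          congr with σ
          rw [smul_mul_smul_comm, smul_smul, ← smul_sub, ← sub_mul]
      _ = c • (s ^ n • (f s * (g s - 1))) - F * (s ^ n • (g s - 1)) := by
          rw [intervalIntegral.integral_sub, intervalIntegral.integral_smul_const, hc,
            integral_mul_const_of_intervalIntegrable]
          all_goals apply Continuous.intervalIntegrable; fun_prop
      _ = _ := by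
          rw [mul_smul_comm, smul_comm c, ← smul_sub, ← smul_mul_assoc, ← sub_mul]
  calc _ = ∫ s in (0:ℝ)..τ, c • (s ^ n • (f s * g s)) - c • (s ^ n • f s) -
        F * (s ^ n • g s) + s ^ n • F := by
        simp only [inner]
        congr with s
        simp only [smul_sub, sub_mul, mul_sub, mul_one, smul_mul_assoc, mul_smul_comm,
          smul_comm (s ^ n) c]
        abel
    _ = _ := by
        rw [intervalIntegral.integral_add, intervalIntegral.integral_sub,
          intervalIntegral.integral_sub, intervalIntegral.integral_smul,
          intervalIntegral.integral_smul, integral_const_mul_of_intervalIntegrable,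
          intervalIntegral.integral_smul_const, hc]
        · abel
        all_goals apply Continuous.intervalIntegrable; fun_prop

end BanachAlgebra

section Phi

variable {X : Type*} [NormedAddCommGroup X] [NormedSpace ℝ X] [CompleteSpace X]

theorem summable_phi (ℓ : ℕ) (T : X →L[ℝ] X) :
    Summable fun k : ℕ => (((ℓ + k)! : ℝ)⁻¹) • T ^ k := by
  refine (norm_expSeries_summable' (𝕂 := ℝ) T).of_norm_bounded fun k => ?_
  simp only [norm_smul, norm_inv, RCLike.norm_natCast]
  gcongr
  omega

theorem Commute.phi_right {S T : X →L[ℝ] X} (h : Commute S T) (ℓ : ℕ) : Commute S (phi ℓ T) :=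
  Commute.tsum_right _ fun k => (h.pow_right k).smul_right _

theorem phi_one_mul (T : X →L[ℝ] X) : phi 1 T * T = exp T - 1 := by
  have hexp : exp T = 1 + ∑' k : ℕ, (((k + 1)! : ℝ)⁻¹) • T ^ (k + 1) := by
    rw [exp_eq_tsum ℝ]
    simp [(expSeries_summable' (𝕂 := ℝ) T).tsum_eq_zero_add]
  rw [hexp, add_sub_cancel_left, phi, ← (summable_phi 1 T).tsum_mul_right]
  simp only [smul_mul_assoc, ← pow_succ, add_comm 1]

theorem smul_phi_one_smul_mul (T : X →L[ℝ] X) (t : ℝ) :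
    t • (phi 1 (t • T) * T) = exp (t • T) - 1 := by
  rw [← mul_smul_comm, phi_one_mul]

theorem integral_pow_smul_exp_sub_smul (n : ℕ) (τ : ℝ) (T : X →L[ℝ] X) :
    ∫ s in (0:ℝ)..τ, s ^ n • exp ((τ - s) • T) = (n ! * τ ^ (n + 1)) • phi (n + 1) (τ • T) := by
  let f : ℕ → C(ℝ, X →L[ℝ] X) := fun k =>
    ⟨fun s => (s ^ n * (τ - s) ^ k * (k ! : ℝ)⁻¹) • T ^ k, by fun_prop⟩
  have hsum : Summable fun k =>
      ‖(f k).restrict (⟨uIcc 0 τ, isCompact_uIcc⟩ : TopologicalSpace.Compacts ℝ)‖ := by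
    refine .of_nonneg_of_le (fun k => by positivity) (fun k => ?_)
      ((norm_expSeries_summable' (𝕂 := ℝ) (τ • T)).mul_left (|τ| ^ n))
    refine (ContinuousMap.norm_le _ (by positivity)).2 ?_
    rintro ⟨x, hx : x ∈ uIcc 0 τ⟩
    have hx₁ : |x| ≤ |τ| := by simpa using abs_sub_left_of_mem_uIcc hx
    have hx₂ : |τ - x| ≤ |τ| := by simpa using abs_sub_right_of_mem_uIcc hx
    simp only [ContinuousMap.restrict_apply, ContinuousMap.coe_mk, f, smul_pow, smul_smul,
      norm_smul, Real.norm_eq_abs, abs_mul, abs_pow, abs_inv, Nat.abs_cast]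
    calc |x| ^ n * |τ - x| ^ k * (k ! : ℝ)⁻¹ * ‖T ^ k‖
        ≤ |τ| ^ n * |τ| ^ k * (k ! : ℝ)⁻¹ * ‖T ^ k‖ := by gcongr
      _ = |τ| ^ n * ((k ! : ℝ)⁻¹ * |τ| ^ k * ‖T ^ k‖) := by ring
  have hpoint (x : ℝ) : ∑' k, f k x = x ^ n • exp ((τ - x) • T) := by
    rw [exp_eq_tsum ℝ, ← (expSeries_summable' (𝕂 := ℝ) _).tsum_const_smul]
    congr with k
    simp only [ContinuousMap.coe_mk, f, smul_pow, smul_smul]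
    rw [mul_assoc, mul_comm ((τ - x) ^ k)]
  have hterm (k : ℕ) : ∫ x in (0:ℝ)..τ, f k x =
      (n ! * τ ^ (n + 1)) • (((n + 1 + k)! : ℝ)⁻¹ • (τ • T) ^ k) := by
    simp only [ContinuousMap.coe_mk, f, intervalIntegral.integral_smul_const,
      intervalIntegral.integral_mul_const, integral_pow_mul_sub_pow, smul_pow, smul_smul,
      show n + k + 1 = n + 1 + k by omega]
    congr 1
    field_simp
    ring
  have H := hasSum_intervalIntegral_of_summable_norm hsum
  simp only [hpoint, hterm] at H
  exact H.unique ((summable_phi _ _).hasSum.const_smul _)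

end Phi

theorem stmt17 {X : Type*} [NormedAddCommGroup X] [NormedSpace ℝ X] [CompleteSpace X]
    (A B : X →L[ℝ] X) (hcomm : A.comp B = B.comp A) (τ : ℝ) (hτ : 0 < τ)
    (ℓ : ℕ) (hℓ : 1 ≤ ℓ) :
    τ • phi ℓ (τ • (A + B)) - (((ℓ)! : ℝ) * τ) • (phi ℓ (τ • A)).comp (phi ℓ (τ • B)) =
      ((ℓ : ℝ) / (τ ^ (2 * ℓ - 1) * ((ℓ - 1)! : ℝ))) •
        ∫ s in (0:ℝ)..τ, ∫ σ in (0:ℝ)..τ, ∫ ξ in s..σ,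
          ((σ * s) ^ (ℓ - 1) * (τ - s)) •
            ((NormedSpace.exp ((τ - ξ) • A)).comp
              ((phi 1 ((τ - s) • B)).comp (B.comp A))) := by
  obtain ⟨n, rfl⟩ : ∃ n, ℓ = n + 1 := ⟨ℓ - 1, by omega⟩
  have hAB : Commute A B := hcomm
  have inner (s σ : ℝ) :
      ∫ ξ in s..σ, ((σ * s) ^ n * (τ - s)) •
        (exp ((τ - ξ) • A) * (phi 1 ((τ - s) • B) * (B * A))) =
      (σ ^ n * s ^ n) • ((exp ((τ - s) • A) - exp ((τ - σ) • A)) * (exp ((τ - s) • B) - 1)) := by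
    have hA : Commute A (phi 1 ((τ - s) • B) * B) :=
      ((hAB.smul_right _).phi_right 1).mul_right hAB
    rw [intervalIntegral.integral_smul, ← mul_assoc, ← hA.eq,
      integral_exp_sub_smul_mul_mul A _ τ s σ, ← smul_phi_one_smul_mul, mul_smul_comm, smul_smul,
      mul_pow]
  simp only [← ContinuousLinearMap.mul_def, Nat.add_sub_cancel, inner]
  rw [integral_integral_pow_smul_sub_mul_sub_one (continuous_exp_sub_smul A τ)
    (continuous_exp_sub_smul B τ)]
  simp only [exp_smul_mul_exp_smul hAB, integral_pow_smul_exp_sub_smul, smul_mul_smul_comm,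
    show 2 * (n + 1) - 1 = 2 * n + 1 by omega, Nat.factorial_succ]
  push_cast
  match_scalars <;> field_simp <;> ring
end
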